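/- arXiv:0812.1302 — 3 statements merged into one kernel-verified Lean document; each statement's English description precedes it below -/
import Mathlib

section
/- Let β ∈ (0,1]. The image of the measure λ ⊗ μ under the map (s,x) ↦ (log s, log(1 + x/s)) from (0,∞) × (0,∞) to ℝ × (0,∞), where λ is Lebesgue measure and μ((x,∞)) = (1+β)/(βx), equals λ ⊗ ρ where ρ((y,∞)) = (1+β)/(β(e^y − 1)) for y > 0. -/
/-!
The map factors as the shear `(s, x) ↦ (s, x / s)` followed by `log × log (1 + ·)`.
A measure with tail `c / x` is homogeneous of degree `-1` under dilations, `μ ∘ (· / s)⁻¹ = s⁻¹ μ`,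
so the shear turns `λ|(0,∞) ⊗ μ` into `(s⁻¹ ds) ⊗ μ`. The substitution `s = eᵗ` pushes `s⁻¹ ds`
forward to Lebesgue measure, and `u ↦ log (1 + u)` pushes `μ` forward to `ρ` because
`μ((eʸ - 1, ∞)) = ρ((y, ∞))`; pushforward commutes with products.
-/

open MeasureTheory Set
open scoped ENNReal

lemma iUnion_Ioi_one_div_nat_succ : ⋃ n : ℕ, Ioi (1 / ((n : ℝ) + 1)) = Ioi 0 := by
  ext x
  simp only [mem_iUnion, mem_Ioi]
  exact ⟨fun ⟨_, hn⟩ => Nat.one_div_pos_of_nat.trans hn, exists_nat_one_div_lt⟩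

namespace MeasureTheory.Measure

variable {μ ν : Measure ℝ}

lemma restrict_Ioi_eq_of_measure_Ioi_eq (hfin : ∀ x > 0, μ (Ioi x) ≠ ∞)
    (h : ∀ x > 0, μ (Ioi x) = ν (Ioi x)) {ε : ℝ} (hε : 0 < ε) :
    μ.restrict (Ioi ε) = ν.restrict (Ioi ε) := by
  have : IsFiniteMeasure (μ.restrict (Ioi ε)) := ⟨by simpa using (hfin ε hε).lt_top⟩
  refine ext_of_generate_finite _ (borel_eq_generateFrom_Ioi ℝ) isPiSystem_Ioi ?_ ?_
  · rintro _ ⟨x, rfl⟩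
    simp only [restrict_apply measurableSet_Ioi, Ioi_inter_Ioi]
    exact h _ (lt_sup_of_lt_right hε)
  · simpa using h ε hε

lemma restrict_Ioi_zero_eq_self (hμ0 : μ (Iic 0) = 0) : μ.restrict (Ioi 0) = μ :=
  restrict_eq_self_of_ae_mem (by rwa [ae_iff, ← compl_def, compl_Ioi])

theorem ext_of_measure_Ioi (hμ0 : μ (Iic 0) = 0) (hν0 : ν (Iic 0) = 0)
    (hfin : ∀ x > 0, μ (Ioi x) ≠ ∞) (h : ∀ x > 0, μ (Ioi x) = ν (Ioi x)) : μ = ν := by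
  rw [← restrict_Ioi_zero_eq_self hμ0, ← restrict_Ioi_zero_eq_self hν0,
    ← iUnion_Ioi_one_div_nat_succ, restrict_iUnion_congr]
  exact fun n => restrict_Ioi_eq_of_measure_Ioi_eq hfin h Nat.one_div_pos_of_nat

theorem sigmaFinite_of_measure_Ioi (hμ0 : μ (Iic 0) = 0) (hfin : ∀ x > 0, μ (Ioi x) ≠ ∞) :
    SigmaFinite μ := by
  refine sigmaFinite_of_countable
    (S := insert (Iic 0) (range fun n : ℕ => Ioi (1 / ((n : ℝ) + 1))))
    ((countable_range _).insert _) ?_ ?_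
  · rintro _ (rfl | ⟨n, rfl⟩)
    · simp [hμ0]
    · exact (hfin _ Nat.one_div_pos_of_nat).lt_top
  · rw [sUnion_insert, sUnion_range, iUnion_Ioi_one_div_nat_succ, Iic_union_Ioi]

theorem map_div_const_of_measure_Ioi {c : ℝ} (hμ0 : μ (Iic 0) = 0)
    (hμ : ∀ x > 0, μ (Ioi x) = ENNReal.ofReal (c / x)) {σ : ℝ} (hσ : 0 < σ) :
    μ.map (· / σ) = (ENNReal.ofReal σ)⁻¹ • μ := by
  have hmeas : Measurable (· / σ : ℝ → ℝ) := by fun_prop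
  have hIoi (x : ℝ) : (· / σ) ⁻¹' Ioi x = Ioi (x * σ) := by
    ext; simp [lt_div_iff₀ hσ]
  refine ext_of_measure_Ioi ?_ (by simp [hμ0]) ?_ fun x hx => ?_
  · rw [map_apply hmeas measurableSet_Iic]
    convert hμ0 using 2
    ext; simp [div_nonpos_iff, hσ.le, not_le.2 hσ]
  · intro x hx
    rw [map_apply hmeas measurableSet_Ioi, hIoi, hμ _ (by positivity)]
    exact ENNReal.ofReal_ne_top
  · rw [map_apply hmeas measurableSet_Ioi, hIoi, hμ _ (by positivity), smul_apply, hμ x hx,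
      smul_eq_mul, ← ENNReal.ofReal_inv_of_pos hσ, ← ENNReal.ofReal_mul (by positivity),
      div_mul_eq_div_div, div_eq_inv_mul]

theorem map_log_one_add_eq (hμ0 : μ (Iic 0) = 0) (hν0 : ν (Iic 0) = 0)
    (hfin : ∀ y > 0, ν (Ioi y) ≠ ∞) (h : ∀ y > 0, ν (Ioi y) = μ (Ioi (Real.exp y - 1))) :
    μ.map (fun u => Real.log (1 + u)) = ν := by
  have hmeas : Measurable fun u : ℝ => Real.log (1 + u) := by fun_prop
  -- `Real.log (1 + u) = log |1 + u|` is large also for very negative `u`; those are `μ`-null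
  have hcarried (A : Set ℝ) : μ A = μ (A ∩ Ioi 0) :=
    (measure_inter_conull (by rwa [compl_Ioi])).symm
  refine (ext_of_measure_Ioi hν0 ?_ hfin fun y hy => ?_).symm
  · rw [map_apply hmeas measurableSet_Iic, hcarried]
    refine measure_mono_null ?_ hμ0
    rintro u ⟨hu, hu0 : 0 < u⟩
    exact absurd hu (Real.log_pos (by linarith)).not_ge
  · rw [map_apply hmeas measurableSet_Ioi, hcarried, h y hy]
    congr 1
    ext u
    simp only [mem_inter_iff, mem_preimage, mem_Ioi]
    constructor
    · intro hu
      have hu0 : 0 < u := lt_of_le_of_lt (by linarith [Real.add_one_le_exp y]) hu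
      exact ⟨(Real.lt_log_iff_exp_lt (by linarith)).2 (by linarith), hu0⟩
    · rintro ⟨hu, hu0⟩
      linarith [(Real.lt_log_iff_exp_lt (by linarith)).1 hu]

theorem map_prod_div_fst [SigmaFinite ν] [SigmaFinite μ]
    (hμ : ∀ σ > 0, μ.map (· / σ) = (ENNReal.ofReal σ)⁻¹ • μ) :
    ((ν.restrict (Ioi 0)).prod μ).map (fun p => (p.1, p.2 / p.1)) =
      ((ν.restrict (Ioi 0)).withDensity fun σ => ENNReal.ofReal σ⁻¹).prod μ := by
  have hmeas : Measurable fun p : ℝ × ℝ => (p.1, p.2 / p.1) := by fun_prop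
  refine (prod_eq fun s t hs ht => ?_).symm
  have hslice : EqOn (fun σ => μ (Prod.mk σ ⁻¹' ((fun p => (p.1, p.2 / p.1)) ⁻¹' s ×ˢ t)))
      (s.indicator fun σ => ENNReal.ofReal σ⁻¹ * μ t) (Ioi 0) := by
    intro σ (hσ : 0 < σ)
    dsimp only
    by_cases hσs : σ ∈ s
    · have hpre : Prod.mk σ ⁻¹' ((fun p => (p.1, p.2 / p.1)) ⁻¹' s ×ˢ t) = (· / σ) ⁻¹' t := by
        ext; simp [hσs]
      rw [hpre, ← map_apply (by fun_prop : Measurable (· / σ : ℝ → ℝ)) ht, hμ σ hσ, smul_apply,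
        smul_eq_mul, indicator_of_mem hσs, ENNReal.ofReal_inv_of_pos hσ]
    · have hpre : Prod.mk σ ⁻¹' ((fun p => (p.1, p.2 / p.1)) ⁻¹' s ×ˢ t) = ∅ := by
        ext; simp [hσs]
      rw [hpre, measure_empty, indicator_of_notMem hσs]
  rw [map_apply hmeas (hs.prod ht), prod_apply (hmeas (hs.prod ht)), withDensity_apply _ hs,
    ← lintegral_mul_const _ (by fun_prop), ← lintegral_indicator hs]
  exact setLIntegral_congr_fun measurableSet_Ioi hslice

end MeasureTheory.Measure

theorem Real.map_exp_volume :
    volume.map Real.exp = (volume.restrict (Ioi 0)).withDensity fun x => ENNReal.ofReal x⁻¹ := by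
  ext t ht
  rw [Measure.map_apply Real.measurable_exp ht, withDensity_apply _ ht,
    Measure.restrict_restrict ht, ← Real.range_exp, ← image_preimage_eq_inter_range,
    lintegral_image_eq_lintegral_abs_deriv_mul (Real.measurable_exp ht)
      (fun x _ => (Real.hasDerivAt_exp x).hasDerivWithinAt) Real.exp_injective.injOn]
  simp [← ENNReal.ofReal_mul, (Real.exp_pos _).le]

theorem Real.map_log_withDensity_inv :
    ((volume.restrict (Ioi 0)).withDensity fun x => ENNReal.ofReal x⁻¹).map Real.log = volume := by
  rw [← Real.map_exp_volume, Measure.map_map Real.measurable_log Real.measurable_exp]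
  simp [Function.comp_def]

theorem mrca_stable_logtransform_general (β : ℝ) (μ ρ : Measure ℝ)
    (hμ : ∀ x > (0:ℝ), μ (Ioi x) = ENNReal.ofReal ((1 + β) / (β * x)))
    (hμ0 : μ (Iic 0) = 0)
    (hρ : ∀ y > (0:ℝ), ρ (Ioi y) = ENNReal.ofReal ((1 + β) / (β * (Real.exp y - 1))))
    (hρ0 : ρ (Iic 0) = 0) :
    Measure.map (fun p : ℝ × ℝ => (Real.log p.1, Real.log (1 + p.2 / p.1)))
        ((volume.restrict (Ioi 0)).prod μ)
      = (volume : Measure ℝ).prod ρ := by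
  have : SigmaFinite μ :=
    Measure.sigmaFinite_of_measure_Ioi hμ0 fun x hx => hμ x hx ▸ ENNReal.ofReal_ne_top
  have hdil (σ : ℝ) (hσ : 0 < σ) : μ.map (· / σ) = (ENNReal.ofReal σ)⁻¹ • μ :=
    Measure.map_div_const_of_measure_Ioi hμ0 (c := (1 + β) / β)
      (fun x hx => by rw [hμ x hx, div_mul_eq_div_div]) hσ
  have hρμ : μ.map (fun u => Real.log (1 + u)) = ρ :=
    Measure.map_log_one_add_eq hμ0 hρ0 (fun y hy => hρ y hy ▸ ENNReal.ofReal_ne_top)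
      fun y hy => by rw [hρ y hy, hμ _ (by linarith [Real.add_one_lt_exp hy.ne'])]
  conv_rhs => rw [← Real.map_log_withDensity_inv, ← hρμ]
  rw [Measure.map_prod_map _ _ Real.measurable_log (by fun_prop),
    ← Measure.map_prod_div_fst (ν := volume) hdil, Measure.map_map (by fun_prop) (by fun_prop)]
  rfl

/-- The image of λ ⊗ μ under (s,x) ↦ (log s, log(1 + x/s)), where
μ((x,∞)) = (1+β)/(βx), equals λ ⊗ ρ with ρ((y,∞)) = (1+β)/(β(e^y − 1)). -/
theorem mrca_stable_logtransform (β : ℝ) (hβ : β ∈ Ioc (0:ℝ) 1) (μ ρ : Measure ℝ)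
    (hμ : ∀ x > (0:ℝ), μ (Ioi x) = ENNReal.ofReal ((1 + β) / (β * x)))
    (hμ0 : μ (Iic 0) = 0)
    (hρ : ∀ y > (0:ℝ), ρ (Ioi y) = ENNReal.ofReal ((1 + β) / (β * (Real.exp y - 1))))
    (hρ0 : ρ (Iic 0) = 0) :
    Measure.map (fun p : ℝ × ℝ => (Real.log p.1, Real.log (1 + p.2 / p.1)))
        ((volume.restrict (Ioi 0)).prod μ)
      = (volume : Measure ℝ).prod ρ :=
  mrca_stable_logtransform_general β μ ρ hμ hμ0 hρ hρ0
end

section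
/- Fix x > 0. The function y ↦ μ((y,∞)) exp(−∫_y^x μ((z,∞)) dz) on (0,x) is a probability density if and only if ∫₀^1 μ((z,∞)) dz = ∞; in particular, under the assumption μ((0,∞)) = ∞ with μ absolutely continuous with a.e.-positive density, if ∫₀^1 μ((z,∞)) dz = ∞ then ∫₀^x μ((y,∞)) exp(−∫_y^x μ((z,∞)) dz) dy = 1. -/
open MeasureTheory Set Filter Topology
open scoped ENNReal symmDiff

/-!
Write `μ̄ y = μ (Ioi y)`. Since `μ` has no atoms and finite tails on `(0, ∞)`, `μ̄` is continuous
there, so `y ↦ exp (-∫ z in y..x, μ̄ z)` has derivative `μ̄ y * exp (-∫ z in y..x, μ̄ z)`, the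
integrand. This derivative is nonnegative, hence integrable, and the fundamental theorem of
calculus gives `1 - L` for the integral over `(0, x)`, where `L` is the limit of
`exp (-∫ z in y..x, μ̄ z)` as `y → 0⁺`. Now `L = 0` exactly when `∫₀ˣ μ̄ = ∞`, and since `μ̄` is
bounded on compact subsets of `(0, ∞)`, this divergence does not depend on the upper limit.
-/

theorem integral_Ioc_of_hasDerivAt_of_tendsto_of_nonneg {f f' : ℝ → ℝ} {a b L : ℝ} (hab : a < b)
    (hderiv : ∀ y ∈ Ioc a b, HasDerivAt f (f' y) y) (hf' : ∀ y ∈ Ioo a b, 0 ≤ f' y)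
    (hlim : Tendsto f (𝓝[>] a) (𝓝 L)) :
    ∫ y in Ioc a b, f' y = f b - L := by
  set F := Function.update f a L
  have hF : ∀ y ∈ Ioo a b, HasDerivAt F (f' y) y := fun y hy =>
    (hderiv y (Ioo_subset_Ioc_self hy)).congr_of_eventuallyEq <| by
      filter_upwards [Ioi_mem_nhds hy.1] with z hz using Function.update_of_ne hz.ne' _ _
  have hFcont : ContinuousOn F (Icc a b) := by
    rw [continuousOn_update_iff, Icc_sdiff_left]
    exact ⟨fun y hy => (hderiv y hy).continuousAt.continuousWithinAt,
      fun _ => hlim.mono_left (nhdsWithin_mono _ Ioc_subset_Ioi_self)⟩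
  have hint : IntervalIntegrable f' volume a b :=
    (intervalIntegrable_iff_integrableOn_Ioc_of_le hab.le).2
      (intervalIntegral.integrableOn_deriv_of_nonneg hFcont hF hf')
  rw [← intervalIntegral.integral_of_le hab.le,
    intervalIntegral.integral_eq_sub_of_hasDerivAt_of_tendsto hab
      (fun y hy => hderiv y (Ioo_subset_Ioc_self hy)) hint hlim
      ((hderiv b (right_mem_Ioc.2 hab)).continuousAt.continuousWithinAt)]

section

variable {g : ℝ → ℝ} {a x : ℝ}

theorem hasDerivAt_exp_neg_integral (hg : ContinuousOn g (Ioi a)) (hx : a < x) {y : ℝ}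
    (hy : a < y) :
    HasDerivAt (fun y => Real.exp (-∫ z in y..x, g z))
      (g y * Real.exp (-∫ z in y..x, g z)) y := by
  have hint : IntervalIntegrable g volume y x :=
    (hg.mono fun z hz => lt_of_lt_of_le (lt_min hy hx) hz.1).intervalIntegrable
  have hK := intervalIntegral.integral_hasDerivAt_left hint
    (hg.stronglyMeasurableAtFilter isOpen_Ioi y hy) (hg.continuousAt (Ioi_mem_nhds hy))
  simpa [mul_comm] using hK.neg.exp

theorem tendsto_ofReal_integral_nhdsGT (hg : ContinuousOn g (Ioi a))
    (hg₀ : ∀ z ∈ Ioi a, 0 ≤ g z) (hx : a < x) :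
    Tendsto (fun y => ENNReal.ofReal (∫ z in y..x, g z)) (𝓝[>] a)
      (𝓝 (∫⁻ z in Ioo a x, ENNReal.ofReal (g z))) := by
  have hcover : AECover (volume.restrict (Ioc a x)) (𝓝[>] a) fun y => Ioc y x :=
    aecover_Ioc_of_Ioc (tendsto_nhdsWithin_of_tendsto_nhds tendsto_id) tendsto_const_nhds
  rw [setLIntegral_congr Ioo_ae_eq_Ioc]
  refine (hcover.lintegral_tendsto_of_countably_generated
    ((hg.aemeasurable measurableSet_Ioi).mono_set Ioc_subset_Ioi_self).ennreal_ofReal).congr' ?_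
  filter_upwards [Ioo_mem_nhdsGT hx] with y ⟨hy, hyx⟩
  have hsub : Icc y x ⊆ Ioi a := fun z hz => hy.trans_le hz.1
  rw [Measure.restrict_restrict measurableSet_Ioc, Ioc_inter_Ioc, max_eq_left hy.le, min_self,
    intervalIntegral.integral_of_le hyx.le, ofReal_integral_eq_lintegral_ofReal
      ((hg.mono hsub).integrableOn_Icc.mono_set Ioc_subset_Icc_self)
      (ae_restrict_of_forall_mem measurableSet_Ioc fun z hz =>
        hg₀ z (hsub (Ioc_subset_Icc_self hz)))]

theorem exists_tendsto_exp_neg_integral_nhdsGT (hg : ContinuousOn g (Ioi a))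
    (hg₀ : ∀ z ∈ Ioi a, 0 ≤ g z) (hx : a < x) :
    ∃ L, Tendsto (fun y => Real.exp (-∫ z in y..x, g z)) (𝓝[>] a) (𝓝 L) ∧
      (L = 0 ↔ ∫⁻ z in Ioo a x, ENNReal.ofReal (g z) = ∞) := by
  have hlim := tendsto_ofReal_integral_nhdsGT hg hg₀ hx
  by_cases htop : ∫⁻ z in Ioo a x, ENNReal.ofReal (g z) = ∞
  · rw [htop, ENNReal.tendsto_ofReal_nhds_top] at hlim
    exact ⟨0, Real.tendsto_exp_atBot.comp (tendsto_neg_atTop_atBot.comp hlim), by simp [htop]⟩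
  · have hK : Tendsto (fun y => ∫ z in y..x, g z) (𝓝[>] a)
        (𝓝 (∫⁻ z in Ioo a x, ENNReal.ofReal (g z)).toReal) := by
      refine ((ENNReal.tendsto_toReal htop).comp hlim).congr' ?_
      filter_upwards [Ioo_mem_nhdsGT hx] with y ⟨hy, hyx⟩
      exact ENNReal.toReal_ofReal <| intervalIntegral.integral_nonneg hyx.le
        fun z hz => hg₀ z (hy.trans_le hz.1)
    exact ⟨_, (Real.continuous_exp.tendsto _).comp hK.neg, by simp [htop, Real.exp_ne_zero]⟩

theorem integral_mul_exp_neg_integral_eq_one_iff (hg : ContinuousOn g (Ioi a))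
    (hg₀ : ∀ z ∈ Ioi a, 0 ≤ g z) (hx : a < x) :
    ∫ y in Ioo a x, g y * Real.exp (-∫ z in y..x, g z) = 1 ↔
      ∫⁻ z in Ioo a x, ENNReal.ofReal (g z) = ∞ := by
  obtain ⟨L, hL, hL₀⟩ := exists_tendsto_exp_neg_integral_nhdsGT hg hg₀ hx
  rw [← integral_Ioc_eq_integral_Ioo, integral_Ioc_of_hasDerivAt_of_tendsto_of_nonneg hx
    (fun y hy => hasDerivAt_exp_neg_integral hg hx hy.1)
    (fun y hy => mul_nonneg (hg₀ y hy.1) (Real.exp_pos _).le) hL, ← hL₀]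
  simp

theorem lintegral_Ioo_ofReal_eq_top_iff_of_le (hg : ContinuousOn g (Ioi a)) {b c : ℝ}
    (hb : a < b) (hbc : b ≤ c) :
    ∫⁻ z in Ioo a c, ENNReal.ofReal (g z) = ∞ ↔ ∫⁻ z in Ioo a b, ENNReal.ofReal (g z) = ∞ := by
  have hfin : ∫⁻ z in Ico b c, ENNReal.ofReal (g z) ≠ ∞ :=
    ((hg.mono fun z hz => hb.trans_le hz.1).integrableOn_Icc.mono_set
      Ico_subset_Icc_self).lintegral_lt_top.ne
  rw [← Ioo_union_Ico_eq_Ioo hb hbc, lintegral_union measurableSet_Ico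
    ((Iio_disjoint_Ici le_rfl).mono Ioo_subset_Iio_self Ico_subset_Ici_self), ENNReal.add_eq_top]
  simp [hfin]

theorem lintegral_Ioo_ofReal_eq_top_iff (hg : ContinuousOn g (Ioi a)) {b c : ℝ}
    (hb : a < b) (hc : a < c) :
    ∫⁻ z in Ioo a b, ENNReal.ofReal (g z) = ∞ ↔ ∫⁻ z in Ioo a c, ENNReal.ofReal (g z) = ∞ :=
  (lintegral_Ioo_ofReal_eq_top_iff_of_le hg (lt_min hb hc) (min_le_left b c)).trans
    (lintegral_Ioo_ofReal_eq_top_iff_of_le hg (lt_min hb hc) (min_le_right b c)).symm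

end

theorem Ioi_symmDiff_Ioi_subset_Icc (y y₀ : ℝ) :
    Ioi y ∆ Ioi y₀ ⊆ Icc (y₀ - dist y y₀) (y₀ + dist y y₀) := by
  intro z hz
  rw [Real.dist_eq]
  simp only [Set.mem_symmDiff, mem_Ioi, not_lt] at hz
  constructor <;> rcases hz with ⟨h1, h2⟩ | ⟨h1, h2⟩ <;>
    cases abs_cases (y - y₀) <;> linarith

namespace MeasureTheory.Measure

noncomputable def tail (μ : Measure ℝ) (y : ℝ) : ℝ := μ.real (Ioi y)

theorem continuous_tail (ν : Measure ℝ) [IsFiniteMeasure ν] [NullSingletonClass ν] :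
    Continuous ν.tail := by
  refine continuous_iff_continuousAt.2 fun y₀ => tendsto_iff_dist_tendsto_zero.2 ?_
  have hδ : Tendsto (fun y => dist y y₀) (𝓝 y₀) (𝓝 0) :=
    (continuous_id.dist continuous_const).tendsto' y₀ 0 (dist_self y₀)
  have hIcc := (ENNReal.tendsto_toReal ENNReal.zero_ne_top).comp
    ((tendsto_measure_Icc ν y₀).comp hδ)
  refine squeeze_zero (fun _ => dist_nonneg) (fun y => ?_) (by simpa using hIcc)
  calc dist (ν.tail y) (ν.tail y₀) ≤ ν.real (Ioi y ∆ Ioi y₀) :=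
        abs_measureReal_sub_le_measureReal_symmDiff measurableSet_Ioi.nullMeasurableSet
          measurableSet_Ioi.nullMeasurableSet
    _ ≤ ν.real (Icc (y₀ - dist y y₀) (y₀ + dist y y₀)) :=
        measureReal_mono (Ioi_symmDiff_Ioi_subset_Icc y y₀)

theorem continuousOn_tail {μ : Measure ℝ} [NullSingletonClass μ] {a : ℝ}
    (hfin : ∀ y > a, μ (Ioi y) < ∞) : ContinuousOn μ.tail (Ioi a) := by
  intro y₀ (hy₀ : a < y₀)
  obtain ⟨c, hac, hcy₀⟩ := exists_between hy₀
  have : IsFiniteMeasure (μ.restrict (Ioi c)) := isFiniteMeasure_restrict.2 (hfin c hac).ne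
  refine ((continuous_tail (μ.restrict (Ioi c))).continuousAt.congr ?_).continuousWithinAt
  filter_upwards [Ioi_mem_nhds hcy₀] with y (hy : c < y)
  rw [tail, tail, measureReal_restrict_apply measurableSet_Ioi, Ioi_inter_Ioi, max_eq_left hy.le]

end MeasureTheory.Measure

theorem mrca_postjump_density_general (m : ℝ → ℝ) (μ : Measure ℝ)
    (hμ : μ = (volume.restrict (Ioi 0)).withDensity fun y => ENNReal.ofReal (m y))
    (hfin : ∀ y > (0:ℝ), μ (Ioi y) < ⊤)
    (x : ℝ) (hx : 0 < x) :
    ((∫ y in Ioo (0:ℝ) x,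
        (μ (Ioi y)).toReal * Real.exp (-∫ z in y..x, (μ (Ioi z)).toReal)) = 1
      ↔ ∫⁻ z in Ioo (0:ℝ) 1, ENNReal.ofReal ((μ (Ioi z)).toReal) = ⊤) ∧
    (μ (Ioi 0) = ⊤ →
      (∫⁻ z in Ioo (0:ℝ) 1, ENNReal.ofReal ((μ (Ioi z)).toReal) = ⊤) →
      (∫ y in Ioo (0:ℝ) x,
        (μ (Ioi y)).toReal * Real.exp (-∫ z in y..x, (μ (Ioi z)).toReal)) = 1) := by
  have : NullSingletonClass μ := hμ ▸ inferInstance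
  have htail := Measure.continuousOn_tail hfin
  have key := (integral_mul_exp_neg_integral_eq_one_iff htail (fun _ _ => measureReal_nonneg)
    hx).trans (lintegral_Ioo_ofReal_eq_top_iff htail hx one_pos)
  exact ⟨key, fun _ => key.2⟩

/-- Fix x > 0. The post-jump density y ↦ μ((y,∞)) exp(−∫_y^x μ((z,∞)) dz) on (0,x)
integrates to 1 if and only if ∫₀^1 μ((z,∞)) dz = ∞. In particular, if μ((0,∞)) = ∞
and ∫₀^1 μ((z,∞)) dz = ∞ then the integral equals 1. -/
theorem mrca_postjump_density (m : ℝ → ℝ) (μ : Measure ℝ)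
    (hm : ∀ᵐ y ∂(volume.restrict (Ioi 0)), 0 < m y)
    (hμ : μ = (volume.restrict (Ioi 0)).withDensity fun y => ENNReal.ofReal (m y))
    (hfin : ∀ y > (0:ℝ), μ (Ioi y) < ⊤)
    (x : ℝ) (hx : 0 < x) :
    ((∫ y in Ioo (0:ℝ) x,
        (μ (Ioi y)).toReal * Real.exp (-∫ z in y..x, (μ (Ioi z)).toReal)) = 1
      ↔ ∫⁻ z in Ioo (0:ℝ) 1, ENNReal.ofReal ((μ (Ioi z)).toReal) = ⊤) ∧
    (μ (Ioi 0) = ⊤ →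
      (∫⁻ z in Ioo (0:ℝ) 1, ENNReal.ofReal ((μ (Ioi z)).toReal) = ⊤) →
      (∫ y in Ioo (0:ℝ) x,
        (μ (Ioi y)).toReal * Real.exp (-∫ z in y..x, (μ (Ioi z)).toReal)) = 1) :=
  mrca_postjump_density_general m μ hμ hfin x hx
end

section
/- The trough chain transition density q(x,z) = μ((z,∞)) ∫_{x∨z}^∞ [m(y)/μ((x,∞))] exp(−∫_z^y μ((u,∞)) du) dy is self-adjoint with respect to the measure with density q(x) = μ((x,∞))² exp(−∫_x^∞ μ((u,∞)) du); i.e., q(x) q(x,z) = q(z) q(z,x) for all x, z > 0. -/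
/-!
Write `G u = μ((u,∞))` and `A a = ∫_a^∞ G`. For `y ≥ z` the exponent splits as
`∫_z^y G = A z - A y`, so `q(x) q(x,z) = G x G z e^{-A x} e^{-A z} ∫_{x∨z}^∞ m(y) e^{A y} dy`
(the factor `1/G x` in the kernel cancels one power of `G x` in the weight), and this
expression is symmetric in `x` and `z`.
-/

open MeasureTheory Set

theorem exp_neg_intervalIntegral_eq_of_integrableOn_Ioi {G : ℝ → ℝ} {z y : ℝ}
    (hG : IntegrableOn G (Ioi z)) (hzy : z ≤ y) :
    Real.exp (-∫ u in z..y, G u) = Real.exp (∫ u in Ioi y, G u) * Real.exp (-∫ u in Ioi z, G u) := by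
  rw [← intervalIntegral.integral_Ioi_sub_Ioi hG hzy, ← Real.exp_add]
  ring_nf

theorem tail_weight_mul_kernel_eq (G m : ℝ → ℝ) {x z : ℝ} (hG : IntegrableOn G (Ioi z)) :
    (G x ^ 2 * Real.exp (-∫ u in Ioi x, G u)) *
        (G z * ∫ y in Ioi (max x z), (m y / G x) * Real.exp (-∫ u in z..y, G u))
      = G x * G z * Real.exp (-∫ u in Ioi x, G u) * Real.exp (-∫ u in Ioi z, G u) *
        ∫ y in Ioi (max x z), m y * Real.exp (∫ u in Ioi y, G u) := by
  rcases eq_or_ne (G x) 0 with hGx | hGx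
  · simp [hGx]
  have hkernel : ∫ y in Ioi (max x z), (m y / G x) * Real.exp (-∫ u in z..y, G u)
      = (G x)⁻¹ * Real.exp (-∫ u in Ioi z, G u) *
          ∫ y in Ioi (max x z), m y * Real.exp (∫ u in Ioi y, G u) := by
    rw [← integral_const_mul]
    refine setIntegral_congr_fun measurableSet_Ioi fun y hy => ?_
    rw [exp_neg_intervalIntegral_eq_of_integrableOn_Ioi hG (max_lt_iff.1 hy).2.le]
    field_simp
  rw [hkernel]
  field_simp

theorem trough_chain_selfadjoint_general (m : ℝ → ℝ) (μ : Measure ℝ)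
    (hint : ∀ x > (0:ℝ), IntegrableOn (fun u => (μ (Ioi u)).toReal) (Ioi x))
    (x z : ℝ) (hx : 0 < x) (hz : 0 < z) :
    ((μ (Ioi x)).toReal ^ 2 * Real.exp (-∫ u in Ioi x, (μ (Ioi u)).toReal)) *
        ((μ (Ioi z)).toReal * ∫ y in Ioi (max x z),
          (m y / (μ (Ioi x)).toReal) * Real.exp (-∫ u in z..y, (μ (Ioi u)).toReal))
      = ((μ (Ioi z)).toReal ^ 2 * Real.exp (-∫ u in Ioi z, (μ (Ioi u)).toReal)) *
        ((μ (Ioi x)).toReal * ∫ y in Ioi (max z x),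
          (m y / (μ (Ioi z)).toReal) * Real.exp (-∫ u in x..y, (μ (Ioi u)).toReal)) := by
  rw [tail_weight_mul_kernel_eq _ m (hint z hz), tail_weight_mul_kernel_eq _ m (hint x hx),
    max_comm]
  ring

/-- The trough chain transition density
q(x,z) = μ((z,∞)) ∫_{x∨z}^∞ [m(y)/μ((x,∞))] exp(−∫_z^y μ((u,∞))du) dy
is self-adjoint with respect to q(x) = μ((x,∞))² exp(−∫_x^∞ μ((u,∞))du):
q(x)q(x,z) = q(z)q(z,x). -/
theorem trough_chain_selfadjoint (m : ℝ → ℝ) (μ : Measure ℝ)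
    (hμ : μ = (volume.restrict (Ioi 0)).withDensity fun x => ENNReal.ofReal (m x))
    (hm : ∀ x ∈ Ioi (0:ℝ), 0 < m x)
    (hfin : ∀ x > (0:ℝ), μ (Ioi x) < ⊤)
    (hint : ∀ x > (0:ℝ), IntegrableOn (fun u => (μ (Ioi u)).toReal) (Ioi x))
    (x z : ℝ) (hx : 0 < x) (hz : 0 < z) :
    ((μ (Ioi x)).toReal ^ 2 * Real.exp (-∫ u in Ioi x, (μ (Ioi u)).toReal)) *
        ((μ (Ioi z)).toReal * ∫ y in Ioi (max x z),
          (m y / (μ (Ioi x)).toReal) * Real.exp (-∫ u in z..y, (μ (Ioi u)).toReal))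
      = ((μ (Ioi z)).toReal ^ 2 * Real.exp (-∫ u in Ioi z, (μ (Ioi u)).toReal)) *
        ((μ (Ioi x)).toReal * ∫ y in Ioi (max z x),
          (m y / (μ (Ioi z)).toReal) * Real.exp (-∫ u in x..y, (μ (Ioi u)).toReal)) :=
  trough_chain_selfadjoint_general m μ hint x z hx hz
end
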